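/- arXiv:1906.02878 — 3 statements merged into one kernel-verified Lean document; each statement's English description precedes it below -/
import Mathlib

section
/- The generalized hypergeometric value satisfies ${}_3F_2\left(\frac{1}{6},\frac{5}{6},\frac{1}{2};1,\frac{3}{2};1\right)=\frac{3\sqrt{3}}{2\pi}\log(2+\sqrt{3})$. -/
open scoped Real

/-- Pochhammer symbol `(a)_n = a(a+1)⋯(a+n-1)`. -/
noncomputable def poch (a : ℝ) (n : ℕ) : ℝ := ∏ i ∈ Finset.range n, (a + i)

/-- Generalized hypergeometric series `₃F₂(a,b,c;d,e;x)`. -/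
noncomputable def F32 (a b c d e x : ℝ) : ℝ :=
  ∑' n : ℕ, poch a n * poch b n * poch c n / (poch d n * poch e n * n.factorial) * x ^ n

/-!
By Wallis, `(1/2)_n / n! = (2/π) ∫₀^{π/2} sin^{2n} x dx`, so the value is
`(2/π) ∫₀^{π/2} ∑ c_n sin^{2n} x dx` with `c_n = (1/6)_n (5/6)_n / ((3/2)_n n!)`; the interchange is
monotone convergence, all terms being nonnegative. The inner series is the classical expansion
`sin (a θ) = a sin θ · ₂F₁((1-a)/2, (1+a)/2; 3/2; sin² θ)` at `a = 2/3`: the right-hand side `f`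
satisfies `f'' = -a² f`, `f 0 = 0`, `f' 0 = 1` (termwise differentiation plus the recurrence of
the coefficients), so it is `sin (a θ)` by an energy argument. With `t = x/3` the integrand becomes
`3 cos t / (3 - 4 sin² t)`, with primitive `(3√3/4) log ((√3 + 2 sin t) / (√3 - 2 sin t))`.
-/

open Real MeasureTheory

lemma poch_succ (a : ℝ) (n : ℕ) : poch a (n + 1) = poch a n * (a + n) :=
  Finset.prod_range_succ _ _

lemma poch_nonneg {a : ℝ} (ha : 0 ≤ a) (n : ℕ) : 0 ≤ poch a n :=
  Finset.prod_nonneg fun _ _ => by positivity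

lemma poch_pos {a : ℝ} (ha : 0 < a) (n : ℕ) : 0 < poch a n :=
  Finset.prod_pos fun _ _ => by positivity

lemma poch_one (n : ℕ) : poch 1 n = n.factorial := by
  induction n with
  | zero => simp [poch]
  | succ n ih => rw [poch_succ, ih, Nat.factorial_succ]; push_cast; ring

lemma poch_half_div_factorial (n : ℕ) :
    poch (1 / 2) n / n.factorial = ∏ i ∈ Finset.range n, (2 * (i : ℝ) + 1) / (2 * i + 2) := by
  rw [← poch_one, poch, poch, ← Finset.prod_div_distrib]
  refine Finset.prod_congr rfl fun i _ => ?_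
  rw [div_eq_div_iff (by positivity) (by positivity)]
  ring

lemma integral_sin_pow_even_half (n : ℕ) :
    ∫ x in (0 : ℝ)..π / 2, sin x ^ (2 * n) = π / 2 * (poch (1 / 2) n / n.factorial) := by
  have hcont : Continuous fun x => sin x ^ (2 * n) := continuous_sin.pow _
  have hsymm : ∫ x in π / 2..π, sin x ^ (2 * n) = ∫ x in (0 : ℝ)..π / 2, sin x ^ (2 * n) := by
    simpa [sin_pi_sub, show π - π / 2 = π / 2 by ring] using
      (intervalIntegral.integral_comp_sub_left (fun x => sin x ^ (2 * n)) π
        (a := 0) (b := π / 2)).symm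
  have hsplit := intervalIntegral.integral_add_adjacent_intervals
    (hcont.intervalIntegrable (μ := volume) 0 (π / 2))
    (hcont.intervalIntegrable (π / 2) π)
  rw [hsymm, integral_sin_pow_even] at hsplit
  rw [poch_half_div_factorial]
  linarith

noncomputable def sinCoeff (a : ℝ) (n : ℕ) : ℝ :=
  poch ((1 - a) / 2) n * poch ((1 + a) / 2) n / (poch (3 / 2) n * n.factorial)

lemma sinCoeff_zero (a : ℝ) : sinCoeff a 0 = 1 := by simp [sinCoeff, poch]

lemma sinCoeff_succ_mul (a : ℝ) (n : ℕ) :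
    sinCoeff a (n + 1) * ((2 * n + 3) * (2 * n + 2)) =
      sinCoeff a n * ((2 * n + 1) ^ 2 - a ^ 2) := by
  have := poch_pos (by norm_num : (0 : ℝ) < 3 / 2) n
  have := n.factorial_pos
  simp only [sinCoeff, poch_succ, Nat.factorial_succ]
  field_simp
  push_cast
  ring

section

variable {a : ℝ} (ha : |a| ≤ 1)
include ha

lemma sinCoeff_nonneg (n : ℕ) : 0 ≤ sinCoeff a n := by
  obtain ⟨h₁, h₂⟩ := abs_le.mp ha
  have := poch_nonneg (a := (1 - a) / 2) (by linarith) n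
  have := poch_nonneg (a := (1 + a) / 2) (by linarith) n
  have := poch_pos (by norm_num : (0 : ℝ) < 3 / 2) n
  unfold sinCoeff
  positivity

lemma sinCoeff_le_one (n : ℕ) : sinCoeff a n ≤ 1 := by
  induction n with
  | zero => rw [sinCoeff_zero]
  | succ n ih =>
    have hrec := sinCoeff_succ_mul a n
    have hc := sinCoeff_nonneg ha n
    have hn : (0 : ℝ) ≤ n := n.cast_nonneg
    nlinarith [sq_nonneg a, sinCoeff_nonneg ha (n + 1)]

lemma abs_sinCoeff_le_one (n : ℕ) : |sinCoeff a n| ≤ 1 :=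
  abs_le.mpr ⟨by linarith [sinCoeff_nonneg ha n], sinCoeff_le_one ha n⟩

end

/-- The bound `2 (2n+1)² rⁿ` is summable for `r < 1`, and `|sin θ| ≤ r < 1` holds uniformly near
any `|θ| < π / 2`: what termwise differentiation needs there. -/
def SinMajorized (F : ℕ → ℝ → ℝ) : Prop :=
  ∀ n θ r, |sin θ| ≤ r → r ≤ 1 → |F n θ| ≤ 2 * ((2 * n + 1) ^ 2 * r ^ n)

lemma abs_sin_pow_le {θ r : ℝ} (hs : |sin θ| ≤ r) (hr : r ≤ 1) {n e : ℕ} (he : n ≤ e) :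
    |sin θ ^ e| ≤ r ^ n := by
  rw [abs_pow]
  exact (pow_le_pow_left₀ (abs_nonneg _) hs e).trans
    (pow_le_pow_of_le_one ((abs_nonneg _).trans hs) hr he)

lemma summable_sinMajorant {r : ℝ} (hr₀ : 0 ≤ r) (hr₁ : r < 1) :
    Summable fun n : ℕ => 2 * ((2 * (n : ℝ) + 1) ^ 2 * r ^ n) := by
  have hr : ‖r‖ < 1 := by rwa [norm_of_nonneg hr₀]
  have h := ((summable_pow_mul_geometric_of_norm_lt_one 2 hr).mul_left 8).add
    (((summable_pow_mul_geometric_of_norm_lt_one 1 hr).mul_left 8).add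
      ((summable_pow_mul_geometric_of_norm_lt_one 0 hr).mul_left 2))
  exact h.congr fun n => by ring

lemma abs_sin_lt_one {θ : ℝ} (hθ : |θ| < π / 2) : |sin θ| < 1 := by
  rw [abs_sin_eq_sin_abs_of_abs_le_pi (by linarith [pi_pos]), ← sin_pi_div_two]
  exact sin_lt_sin_of_lt_of_le_pi_div_two (by linarith [abs_nonneg θ, pi_pos]) le_rfl hθ

lemma SinMajorized.summable {F : ℕ → ℝ → ℝ} (hF : SinMajorized F) {θ : ℝ} (hθ : |θ| < π / 2) :
    Summable fun n => F n θ :=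
  .of_norm_bounded (summable_sinMajorant (abs_nonneg _) (abs_sin_lt_one hθ))
    fun n => hF n θ _ le_rfl (abs_sin_lt_one hθ).le

lemma SinMajorized.hasDerivAt_tsum {F F' : ℕ → ℝ → ℝ} (hF : SinMajorized F)
    (hF' : SinMajorized F') (hd : ∀ n θ, HasDerivAt (F n) (F' n θ) θ) {y : ℝ}
    (hy : |y| < π / 2) : HasDerivAt (fun θ => ∑' n, F n θ) (∑' n, F' n y) y := by
  obtain ⟨b, hyb, hbπ⟩ := exists_between hy
  have hb₀ : 0 < b := (abs_nonneg y).trans_lt hyb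
  have hb : |b| < π / 2 := by rwa [abs_of_pos hb₀]
  have hsin : ∀ z ∈ Set.Ioo (-b) b, |sin z| ≤ |sin b| := by
    intro z hz
    have hz' : |z| ≤ b := abs_le.mpr ⟨hz.1.le, hz.2.le⟩
    rw [abs_sin_eq_sin_abs_of_abs_le_pi (by linarith [pi_pos]),
      abs_sin_eq_sin_abs_of_abs_le_pi (by linarith [pi_pos]), abs_of_pos hb₀]
    exact sin_le_sin_of_le_of_le_pi_div_two (by linarith [abs_nonneg z, pi_pos]) hbπ.le hz'
  exact hasDerivAt_tsum_of_isPreconnected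
    (summable_sinMajorant (abs_nonneg _) (abs_sin_lt_one hb)) isOpen_Ioo isPreconnected_Ioo
    (fun n z _ => hd n z) (fun n z hz => hF' n z _ (hsin z hz) (abs_sin_lt_one hb).le)
    (⟨by linarith, hb₀⟩ : (0 : ℝ) ∈ Set.Ioo (-b) b)
    (hF.summable (by simp [pi_pos])) (abs_lt.mp hyb)

noncomputable def sinTerm (a : ℝ) (n : ℕ) (θ : ℝ) : ℝ := sinCoeff a n * sin θ ^ (2 * n + 1)

noncomputable def sinTermDeriv (a : ℝ) (n : ℕ) (θ : ℝ) : ℝ :=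
  sinCoeff a n * (2 * n + 1) * (sin θ ^ (2 * n) * cos θ)

/-- `2 * n - 1` truncates at `n = 0`, where the factor `2 * n` vanishes. -/
noncomputable def sinTermAux (a : ℝ) (n : ℕ) (θ : ℝ) : ℝ :=
  sinCoeff a n * ((2 * n + 1) * (2 * n)) * sin θ ^ (2 * n - 1)

/-- The derivative of `sinTermDeriv a n`, after substituting `cos² θ = 1 - sin² θ`. -/
noncomputable def sinTermDeriv2 (a : ℝ) (n : ℕ) (θ : ℝ) : ℝ :=
  sinTermAux a n θ - (2 * n + 1) ^ 2 * sinTerm a n θ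

lemma hasDerivAt_sinTerm (a : ℝ) (n : ℕ) (θ : ℝ) :
    HasDerivAt (sinTerm a n) (sinTermDeriv a n θ) θ := by
  have h := ((hasDerivAt_sin θ).pow (2 * n + 1)).const_mul (sinCoeff a n)
  unfold sinTerm
  refine h.congr_deriv ?_
  simp only [sinTermDeriv, Nat.add_sub_cancel]
  push_cast
  ring

lemma hasDerivAt_sinTermDeriv (a : ℝ) (n : ℕ) (θ : ℝ) :
    HasDerivAt (sinTermDeriv a n) (sinTermDeriv2 a n θ) θ := by
  have h := (((hasDerivAt_sin θ).pow (2 * n)).mul (hasDerivAt_cos θ)).const_mul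
    (sinCoeff a n * (2 * n + 1))
  unfold sinTermDeriv
  refine h.congr_deriv ?_
  rcases n with _ | n
  · simp [sinTermDeriv2, sinTermAux, sinTerm]
  · simp only [sinTermDeriv2, sinTermAux, sinTerm, Pi.pow_apply,
      show 2 * (n + 1) - 1 = 2 * n + 1 by omega]
    push_cast
    linear_combination (sinCoeff a (n + 1) * (2 * n + 3) * (2 * n + 2) * sin θ ^ (2 * n + 1)) *
      sin_sq_add_cos_sq θ

lemma sinTermAux_succ (a : ℝ) (n : ℕ) (θ : ℝ) :
    sinTermAux a (n + 1) θ = ((2 * n + 1) ^ 2 - a ^ 2) * sinTerm a n θ := by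
  simp only [sinTermAux, sinTerm, show 2 * (n + 1) - 1 = 2 * n + 1 by omega]
  push_cast
  linear_combination sin θ ^ (2 * n + 1) * sinCoeff_succ_mul a n

lemma abs_mul_mul_le_sinMajorant {c p x r : ℝ} {n : ℕ} (hc : |c| ≤ 1)
    (hp : |p| ≤ (2 * n + 1) ^ 2) (hx : |x| ≤ r ^ n) : |c * p * x| ≤ (2 * n + 1) ^ 2 * r ^ n := by
  rw [abs_mul, abs_mul]
  calc |c| * |p| * |x| ≤ 1 * (2 * n + 1) ^ 2 * r ^ n := by gcongr
    _ = (2 * n + 1) ^ 2 * r ^ n := by ring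

lemma le_two_mul_sinMajorant {r : ℝ} (hr : 0 ≤ r) (n : ℕ) :
    (2 * n + 1) ^ 2 * r ^ n ≤ 2 * ((2 * n + 1) ^ 2 * r ^ n) :=
  le_mul_of_one_le_left (by positivity) one_le_two

section

variable {a : ℝ} (ha : |a| ≤ 1)
include ha

lemma abs_sinTerm_le {n : ℕ} {θ r : ℝ} (hs : |sin θ| ≤ r) (hr : r ≤ 1) :
    |sinTerm a n θ| ≤ r ^ n := by
  rw [sinTerm, abs_mul]
  exact (mul_le_mul (abs_sinCoeff_le_one ha n) (abs_sin_pow_le hs hr (by omega)) (abs_nonneg _)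
    zero_le_one).trans_eq (one_mul _)

lemma abs_sinTermAux_le {n : ℕ} {θ r : ℝ} (hs : |sin θ| ≤ r) (hr : r ≤ 1) :
    |sinTermAux a n θ| ≤ (2 * n + 1) ^ 2 * r ^ n := by
  refine abs_mul_mul_le_sinMajorant (abs_sinCoeff_le_one ha n) ?_ (abs_sin_pow_le hs hr (by omega))
  rw [abs_of_nonneg (by positivity)]
  nlinarith [n.cast_nonneg (α := ℝ)]

lemma sinMajorized_sinTerm : SinMajorized (sinTerm a) := by
  intro n θ r hs hr
  have := pow_nonneg ((abs_nonneg _).trans hs) n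
  have := abs_sinTerm_le ha (n := n) hs hr
  nlinarith [sq_nonneg (n : ℝ), n.cast_nonneg (α := ℝ)]

lemma sinMajorized_sinTermAux : SinMajorized (sinTermAux a) := fun _ _ _ hs hr =>
  (abs_sinTermAux_le ha hs hr).trans (le_two_mul_sinMajorant ((abs_nonneg _).trans hs) _)

lemma sinMajorized_sinTermDeriv : SinMajorized (sinTermDeriv a) := by
  intro n θ r hs hr
  refine (abs_mul_mul_le_sinMajorant (abs_sinCoeff_le_one ha n) ?_ ?_).trans
    (le_two_mul_sinMajorant ((abs_nonneg _).trans hs) _)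
  · rw [abs_of_nonneg (by positivity)]
    nlinarith [n.cast_nonneg (α := ℝ)]
  · rw [abs_mul]
    exact (mul_le_of_le_one_right (abs_nonneg _) (abs_cos_le_one θ)).trans
      (abs_sin_pow_le hs hr (by omega))

lemma sinMajorized_sinTermDeriv2 : SinMajorized (sinTermDeriv2 a) := by
  intro n θ r hs hr
  have hn : (0 : ℝ) ≤ (2 * n + 1) ^ 2 := by positivity
  calc |sinTermDeriv2 a n θ|
      ≤ |sinTermAux a n θ| + (2 * n + 1) ^ 2 * |sinTerm a n θ| :=
        (abs_sub _ _).trans_eq (by rw [abs_mul, abs_of_nonneg hn])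
    _ ≤ (2 * n + 1) ^ 2 * r ^ n + (2 * n + 1) ^ 2 * r ^ n := by
        gcongr
        exacts [abs_sinTermAux_le ha hs hr, abs_sinTerm_le ha hs hr]
    _ = 2 * ((2 * n + 1) ^ 2 * r ^ n) := by ring

end

/-- By `sinTermAux_succ` the series telescopes. -/
lemma tsum_sinTermDeriv2 {a θ : ℝ} (ha : |a| ≤ 1) (hθ : |θ| < π / 2) :
    ∑' n, sinTermDeriv2 a n θ = -a ^ 2 * ∑' n, sinTerm a n θ := by
  have hS := (sinMajorized_sinTerm ha).summable hθ
  have hA := (sinMajorized_sinTermAux ha).summable hθ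
  have htelescope : ∑' n, (sinTermAux a n θ - sinTermAux a (n + 1) θ) = 0 := by
    rw [hA.tsum_sub ((summable_nat_add_iff 1).mpr hA), hA.tsum_eq_zero_add]
    simp [sinTermAux]
  have hterm : ∀ n, sinTermDeriv2 a n θ =
      (sinTermAux a n θ - sinTermAux a (n + 1) θ) + -a ^ 2 * sinTerm a n θ := fun n => by
    rw [sinTermDeriv2, sinTermAux_succ]
    ring
  rw [tsum_congr hterm, (hA.sub ((summable_nat_add_iff 1).mpr hA)).tsum_add (hS.mul_left _),
    htelescope, tsum_mul_left, zero_add]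

lemma harmonic_oscillator_eqOn_zero {s : Set ℝ} (hs : IsOpen s) (hs' : IsPreconnected s)
    {k : ℝ} (hk : 0 ≤ k) {v w : ℝ → ℝ} (hv : ∀ y ∈ s, HasDerivAt v (w y) y)
    (hw : ∀ y ∈ s, HasDerivAt w (-k * v y) y) {y₀ : ℝ} (hy₀ : y₀ ∈ s) (hv₀ : v y₀ = 0)
    (hw₀ : w y₀ = 0) : Set.EqOn v 0 s := by
  -- the energy `k v² + w²` is constant, hence zero
  have hE : ∀ y ∈ s, HasDerivAt (fun y => k * v y ^ 2 + w y ^ 2) 0 y := fun y hy => by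
    refine ((((hv y hy).pow 2).const_mul k).add ((hw y hy).pow 2)).congr_deriv ?_
    push_cast
    ring
  have hw_zero : ∀ y ∈ s, w y = 0 := fun y hy => by
    have := hs.is_const_of_deriv_eq_zero hs'
      (fun z hz => (hE z hz).differentiableAt.differentiableWithinAt)
      (fun z hz => (hE z hz).deriv) hy hy₀
    simp only [hv₀, hw₀] at this
    nlinarith [sq_nonneg (v y), sq_nonneg (w y), mul_nonneg hk (sq_nonneg (v y))]
  intro y hy
  rw [Pi.zero_apply, ← hv₀]
  exact hs.is_const_of_deriv_eq_zero hs'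
    (fun z hz => (hv z hz).differentiableAt.differentiableWithinAt)
    (fun z hz => (hv z hz).deriv.trans (hw_zero z hz)) hy hy₀

theorem mul_tsum_sinTerm {a θ : ℝ} (ha : |a| ≤ 1) (hθ : |θ| < π / 2) :
    a * ∑' n, sinTerm a n θ = sin (a * θ) := by
  set s := Set.Ioo (-(π / 2)) (π / 2)
  have hlin (y : ℝ) : HasDerivAt (fun θ => a * θ) a y := by
    simpa using (hasDerivAt_id y).const_mul a
  have hv : ∀ y ∈ s, HasDerivAt (fun θ => a * ∑' n, sinTerm a n θ - sin (a * θ))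
      (a * ∑' n, sinTermDeriv a n y - a * cos (a * y)) y := fun y hy => by
    refine ((((sinMajorized_sinTerm ha).hasDerivAt_tsum (sinMajorized_sinTermDeriv ha)
      (hasDerivAt_sinTerm a) (abs_lt.mpr hy)).const_mul a).sub (hlin y).sin).congr_deriv ?_
    ring
  have hw : ∀ y ∈ s, HasDerivAt (fun θ => a * ∑' n, sinTermDeriv a n θ - a * cos (a * θ))
      (-a ^ 2 * (a * ∑' n, sinTerm a n y - sin (a * y))) y := fun y hy => by
    refine ((((sinMajorized_sinTermDeriv ha).hasDerivAt_tsum (sinMajorized_sinTermDeriv2 ha)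
      (hasDerivAt_sinTermDeriv a) (abs_lt.mpr hy)).const_mul a).sub
      ((hlin y).cos.const_mul a)).congr_deriv ?_
    rw [tsum_sinTermDeriv2 ha (abs_lt.mpr hy)]
    ring
  have hv₀ : ∑' n, sinTerm a n 0 = 0 := by simp [sinTerm]
  have hw₀ : ∑' n, sinTermDeriv a n 0 = 1 := by
    rw [tsum_eq_single 0 fun n hn => by simp [sinTermDeriv, hn]]
    simp [sinTermDeriv, sinCoeff_zero]
  have := harmonic_oscillator_eqOn_zero isOpen_Ioo isPreconnected_Ioo (sq_nonneg a) hv hw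
    (⟨by linarith [pi_pos], by linarith [pi_pos]⟩ : (0 : ℝ) ∈ s)
    (by simp [hv₀]) (by simp [hw₀]) (abs_lt.mp hθ)
  simpa [sub_eq_zero] using this

lemma hasSum_sinCoeff_two_thirds {x : ℝ} (hx : |x| < π / 2) (hsin : sin x ≠ 0) :
    HasSum (fun n => sinCoeff (2 / 3) n * sin x ^ (2 * n))
      (3 * cos (x / 3) / (3 - 4 * sin (x / 3) ^ 2)) := by
  have ha : |(2 / 3 : ℝ)| ≤ 1 := by norm_num [abs_of_pos]
  have hterm : ∀ n, sinCoeff (2 / 3) n * sin x ^ (2 * n) = sinTerm (2 / 3) n x / sin x := by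
    intro n
    rw [sinTerm, pow_succ]
    field_simp
  have hsum := ((sinMajorized_sinTerm ha).summable hx).div_const (sin x)
  simp_rw [hterm]
  refine (hsum.hasSum_iff).mpr ?_
  have hsin3 : sin x = sin (x / 3) * (3 - 4 * sin (x / 3) ^ 2) := by
    conv_lhs => rw [show x = 3 * (x / 3) by ring, sin_three_mul]
    ring
  have hden : 3 - 4 * sin (x / 3) ^ 2 ≠ 0 := right_ne_zero_of_mul (hsin3 ▸ hsin)
  have key := mul_tsum_sinTerm ha hx
  rw [show 2 / 3 * x = 2 * (x / 3) by ring, sin_two_mul] at key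
  rw [tsum_div_const, div_eq_div_iff hsin hden, hsin3]
  linear_combination (3 / 2 * (3 - 4 * sin (x / 3) ^ 2)) * key

lemma sin_div_three_mem {θ : ℝ} (h₀ : 0 ≤ θ) (h₁ : θ ≤ π / 2) :
    0 ≤ sin (θ / 3) ∧ sin (θ / 3) ≤ 1 / 2 := by
  refine ⟨sin_nonneg_of_nonneg_of_le_pi (by linarith) (by linarith [pi_pos]), ?_⟩
  rw [← sin_pi_div_six]
  exact sin_le_sin_of_le_of_le_pi_div_two (by linarith [pi_pos]) (by linarith [pi_pos])
    (by linarith)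

lemma continuousOn_three_cos_div :
    ContinuousOn (fun θ => 3 * cos (θ / 3) / (3 - 4 * sin (θ / 3) ^ 2)) (Set.Icc 0 (π / 2)) := by
  refine ContinuousOn.div (by fun_prop) (by fun_prop) fun θ hθ => ?_
  obtain ⟨hs₀, hs₁⟩ := sin_div_three_mem hθ.1 hθ.2
  nlinarith

lemma integral_three_cos_div :
    ∫ x in (0 : ℝ)..π / 2, 3 * cos (x / 3) / (3 - 4 * sin (x / 3) ^ 2)
      = 3 * √3 / 4 * log (2 + √3) := by
  have h3 : √3 * √3 = 3 := Real.mul_self_sqrt (by norm_num)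
  have h1 : 1 < √3 := by nlinarith [Real.sqrt_nonneg 3]
  have hIcc : Set.uIcc 0 (π / 2) = Set.Icc 0 (π / 2) := Set.uIcc_of_le (by positivity)
  have hderiv : ∀ θ ∈ Set.uIcc 0 (π / 2), HasDerivAt
      (fun θ => 3 * √3 / 4 * (log (√3 + 2 * sin (θ / 3)) - log (√3 - 2 * sin (θ / 3))))
      (3 * cos (θ / 3) / (3 - 4 * sin (θ / 3) ^ 2)) θ := by
    intro θ hθ
    rw [hIcc] at hθ
    obtain ⟨hs₀, hs₁⟩ := sin_div_three_mem hθ.1 hθ.2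
    have hsin : HasDerivAt (fun θ => 2 * sin (θ / 3)) (2 * (cos (θ / 3) * (1 / 3))) θ :=
      (((hasDerivAt_id θ).div_const 3).sin).const_mul 2
    have hp : 0 < √3 + 2 * sin (θ / 3) := by linarith
    have hm : 0 < √3 - 2 * sin (θ / 3) := by linarith
    have hd : 3 - 4 * sin (θ / 3) ^ 2 ≠ 0 := by nlinarith
    refine ((((hsin.const_add _).log hp.ne').sub ((hsin.const_sub _).log hm.ne')).const_mul
      _).congr_deriv ?_
    field_simp
    linear_combination (-(16 * cos (θ / 3) * sin (θ / 3) ^ 2)) * h3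
  rw [intervalIntegral.integral_eq_sub_of_hasDerivAt hderiv
      (hIcc ▸ continuousOn_three_cos_div).intervalIntegrable,
    show π / 2 / 3 = π / 6 by ring, sin_pi_div_six, zero_div, sin_zero, ← log_div, ← log_div]
  · rw [show (√3 + 2 * (1 / 2)) / (√3 - 2 * (1 / 2)) = 2 + √3 by
      rw [div_eq_iff (by linarith)]; linear_combination -h3]
    simp
  all_goals nlinarith

lemma hasSum_integral_of_nonneg {α : Type*} [MeasurableSpace α] {μ : Measure α}
    {f : ℕ → α → ℝ} {F : α → ℝ} (hf : ∀ n, Integrable (f n) μ) (hF : Integrable F μ)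
    (hnonneg : ∀ n, 0 ≤ᵐ[μ] f n) (hsum : ∀ᵐ x ∂μ, HasSum (fun n => f n x) (F x)) :
    HasSum (fun n => ∫ x, f n x ∂μ) (∫ x, F x ∂μ) := by
  rw [hasSum_iff_tendsto_nat_of_nonneg fun n => integral_nonneg_of_ae (hnonneg n)]
  simp_rw [← integral_finsetSum _ fun n _ => hf n]
  refine integral_tendsto_of_tendsto_of_monotone (fun n => integrable_finsetSum _ fun i _ => hf i)
    hF ?_ (hsum.mono fun x hx => hx.tendsto_sum_nat)
  filter_upwards [ae_all_iff.mpr hnonneg] with x hx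
  exact monotone_nat_of_le_succ fun n => by
    simpa [Finset.sum_range_succ] using hx n

lemma F32_term_eq (n : ℕ) :
    poch (1 / 6) n * poch (5 / 6) n * poch (1 / 2) n / (poch 1 n * poch (3 / 2) n * n.factorial)
      * 1 ^ n = 2 / π * ∫ x in (0 : ℝ)..π / 2, sinCoeff (2 / 3) n * sin x ^ (2 * n) := by
  have := poch_pos (by norm_num : (0 : ℝ) < 3 / 2) n
  have := n.factorial_pos
  rw [intervalIntegral.integral_const_mul, integral_sin_pow_even_half, poch_one, sinCoeff]
  norm_num
  field_simp

lemma hasSum_integral_sinCoeff_two_thirds :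
    HasSum (fun n => ∫ x in (0 : ℝ)..π / 2, sinCoeff (2 / 3) n * sin x ^ (2 * n))
      (3 * √3 / 4 * log (2 + √3)) := by
  have hIoo (f : ℝ → ℝ) : ∫ x in Set.Ioo 0 (π / 2), f x = ∫ x in (0 : ℝ)..π / 2, f x := by
    rw [intervalIntegral.integral_of_le (by positivity), integral_Ioc_eq_integral_Ioo]
  have hsum := hasSum_integral_of_nonneg (μ := volume.restrict (Set.Ioo 0 (π / 2)))
    (f := fun n x => sinCoeff (2 / 3) n * sin x ^ (2 * n))
    (F := fun x => 3 * cos (x / 3) / (3 - 4 * sin (x / 3) ^ 2))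
    (fun n => (Continuous.integrableOn_Icc (by fun_prop)).mono_set Set.Ioo_subset_Icc_self)
    (continuousOn_three_cos_div.integrableOn_Icc.mono_set Set.Ioo_subset_Icc_self)
    (fun n => ae_restrict_of_forall_mem measurableSet_Ioo fun x _ =>
      mul_nonneg (sinCoeff_nonneg (by norm_num [abs_of_pos]) n) ((even_two_mul n).pow_nonneg _))
    (ae_restrict_of_forall_mem measurableSet_Ioo fun x hx =>
      hasSum_sinCoeff_two_thirds (abs_lt.mpr ⟨by linarith [hx.1, pi_pos], hx.2⟩)
        (sin_pos_of_pos_of_lt_pi hx.1 (by linarith [hx.2, pi_pos])).ne')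
  simpa only [hIoo, integral_three_cos_div] using hsum

theorem stmt0 :
    F32 (1/6) (5/6) (1/2) 1 (3/2) 1
      = 3 * Real.sqrt 3 / (2 * π) * Real.log (2 + Real.sqrt 3) := by
  rw [F32, tsum_congr F32_term_eq, tsum_mul_left, hasSum_integral_sinCoeff_two_thirds.tsum_eq]
  field_simp
  ring
end

section
/- Gauss's summation theorem: for complex numbers $a,b,c$ with $\mathrm{Re}(c-a-b)>0$ and $c$ not a nonpositive integer, ${}_2F_1(a,b;c;1)=\frac{\Gamma(c)\Gamma(c-a-b)}{\Gamma(c-a)\Gamma(c-b)}$. -/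
/-- Complex Pochhammer symbol `(a)_n`. -/
noncomputable def pochC (a : ℂ) (n : ℕ) : ℂ := ∏ i ∈ Finset.range n, (a + i)

/-- Gauss hypergeometric series `₂F₁(a,b;c;x)`. -/
noncomputable def F21C (a b c x : ℂ) : ℂ :=
  ∑' n : ℕ, pochC a n * pochC b n / (pochC c n * n.factorial) * x ^ n

/-!
Gauss's product `Γ(s) = lim nˢ n! / (s)ₙ₊₁` shows that the terms `(a)ₙ(b)ₙ / ((c)ₙ n!)` are
`O(n^(a+b-c-1))`, so the series converges at `1` and `n` times its `n`-th term tends to `0`. This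
makes a telescoping sum vanish, which is the contiguous relation
`c (c-a-b) F(c) = (c-a)(c-b) F(c+1)` for `F(c) = ₂F₁(a,b;c;1)`. Iterating it,
`F(c) = (c-a)ₘ(c-b)ₘ / ((c)ₘ(c-a-b)ₘ) · F(c+m)`. As `m → ∞`, `F(c+m) → 1` because every term
after the first carries the factor `1/(c+m)`, and, by Gauss's product again, the quotient of
Pochhammer symbols tends to `Γ(c)Γ(c-a-b) / (Γ(c-a)Γ(c-b))`.
-/

open Filter Finset Topology Asymptotics Complex
open scoped Nat

lemma pochC_zero (a : ℂ) : pochC a 0 = 1 := prod_range_zero _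

lemma pochC_succ (a : ℂ) (n : ℕ) : pochC a (n + 1) = pochC a n * (a + n) :=
  prod_range_succ _ _

lemma pochC_succ' (a : ℂ) (n : ℕ) : pochC a (n + 1) = a * pochC (a + 1) n := by
  simp only [pochC, prod_range_succ', Nat.cast_add, Nat.cast_one, Nat.cast_zero, add_zero]
  rw [mul_comm]
  congr! 2 with i
  ring

lemma pochC_ne_zero {c : ℂ} (hc : ∀ n : ℕ, c ≠ -n) (n : ℕ) : pochC c n ≠ 0 :=
  prod_ne_zero_iff.2 fun i _ h ↦ hc i (eq_neg_of_add_eq_zero_left h)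

lemma ne_neg_natCast_of_re_pos {z : ℂ} (hz : 0 < z.re) (n : ℕ) : z ≠ -n := fun h ↦ by
  have := congrArg re h
  simp only [neg_re, natCast_re] at this
  linarith [n.cast_nonneg (α := ℝ)]

lemma add_natCast_ne_neg_natCast {c : ℂ} (hc : ∀ n : ℕ, c ≠ -n) (m n : ℕ) : c + m ≠ -n :=
  fun h ↦ hc (m + n) (by push_cast; linear_combination h)

lemma norm_pochC_le (a : ℂ) (n : ℕ) : ‖pochC a n‖ ≤ ‖pochC ‖a‖ n‖ := by
  simp only [pochC, norm_prod]
  gcongr with i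
  have : ‖(‖a‖ : ℂ) + i‖ = ‖a‖ + i := by
    exact_mod_cast Complex.norm_of_nonneg (by positivity : 0 ≤ ‖a‖ + i)
  exact (norm_add_le _ _).trans_eq (by simp [this])

lemma norm_pochC_le_of_le_re {x : ℝ} (hx : 0 ≤ x) {z : ℂ} (hxz : x ≤ z.re) (n : ℕ) :
    ‖pochC x n‖ ≤ ‖pochC z n‖ := by
  simp only [pochC, norm_prod]
  gcongr with i
  have : ‖(x : ℂ) + i‖ = x + i := by
    exact_mod_cast Complex.norm_of_nonneg (by positivity : 0 ≤ x + i)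
  rw [this]
  exact le_trans (by simpa using hxz) (re_le_norm _)

-- No condition on `s` is needed: if `(s)ₙ₊₁ = 0` then `GammaSeq s n = 0`, and `0⁻¹ = 0`.
lemma pochC_succ_eq_mul_inv_GammaSeq (s : ℂ) {n : ℕ} (hn : n ≠ 0) :
    pochC s (n + 1) = (n : ℂ) ^ s * n ! * (GammaSeq s n)⁻¹ := by
  have : (n : ℂ) ^ s * n ! ≠ 0 := by simp [hn, Nat.factorial_ne_zero]
  rw [GammaSeq, inv_div, mul_div_cancel₀ _ this, pochC]

-- At a pole `s = -k` both `GammaSeq s n` (for `n ≥ k`) and Mathlib's `Gamma s` are `0`.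
lemma tendsto_inv_GammaSeq (s : ℂ) :
    Tendsto (fun n ↦ (GammaSeq s n)⁻¹) atTop (𝓝 (Gamma s)⁻¹) := by
  by_cases hs : Gamma s = 0
  · obtain ⟨k, rfl⟩ := (Gamma_eq_zero_iff s).1 hs
    rw [hs, inv_zero]
    refine tendsto_const_nhds.congr' ?_
    filter_upwards [eventually_ge_atTop k] with n hn
    rw [GammaSeq, prod_eq_zero (mem_range.2 (Nat.lt_succ_of_le hn)) (neg_add_cancel _)]
    simp
  · exact (GammaSeq_tendsto_Gamma s).inv₀ hs

noncomputable def gaussTerm (a b c : ℂ) (n : ℕ) : ℂ :=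
  pochC a n * pochC b n / (pochC c n * n !)

lemma F21C_one (a b c : ℂ) : F21C a b c 1 = ∑' n, gaussTerm a b c n := by
  simp [F21C, gaussTerm]

lemma gaussTerm_zero (a b c : ℂ) : gaussTerm a b c 0 = 1 := by
  simp [gaussTerm, pochC_zero]

lemma gaussTerm_succ (a b c : ℂ) (n : ℕ) :
    gaussTerm a b c (n + 1) = gaussTerm a b c n * ((a + n) * (b + n) / ((c + n) * (n + 1))) := by
  simp only [gaussTerm, pochC_succ, Nat.factorial_succ, Nat.cast_mul, Nat.cast_succ]
  rw [div_mul_div_comm]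
  ring

lemma gaussTerm_add_one_right (a b : ℂ) {c : ℂ} (hc : ∀ n : ℕ, c ≠ -n) (n : ℕ) :
    (c + n) * gaussTerm a b (c + 1) n = c * gaussTerm a b c n := by
  have hc₁ : ∀ n : ℕ, c + 1 ≠ -n := by exact_mod_cast add_natCast_ne_neg_natCast hc 1
  have hpoch : pochC c n * (c + n) = c * pochC (c + 1) n := by rw [← pochC_succ, pochC_succ']
  have := pochC_ne_zero hc n
  have := pochC_ne_zero hc₁ n
  have : (n ! : ℂ) ≠ 0 := by exact_mod_cast n.factorial_ne_zero
  simp only [gaussTerm]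
  field_simp
  linear_combination (pochC a n * pochC b n) * hpoch

lemma gaussTerm_succ_eq_GammaSeq (a b c : ℂ) {n : ℕ} (hn : n ≠ 0) :
    gaussTerm a b c (n + 1) = (n : ℂ) ^ (a + b - c) / (n + 1) *
      ((GammaSeq a n)⁻¹ * (GammaSeq b n)⁻¹ * GammaSeq c n) := by
  have hn' : (n : ℂ) ≠ 0 := Nat.cast_ne_zero.2 hn
  have : (n ! : ℂ) ≠ 0 := by exact_mod_cast n.factorial_ne_zero
  have : (n : ℂ) + 1 ≠ 0 := by exact_mod_cast n.succ_ne_zero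
  have : (n : ℂ) ^ c ≠ 0 := by simp [hn']
  simp only [gaussTerm, pochC_succ_eq_mul_inv_GammaSeq _ hn, Nat.factorial_succ, Nat.cast_mul,
    Nat.cast_succ, cpow_sub _ _ hn', cpow_add _ _ hn', div_eq_mul_inv, mul_inv, inv_inv]
  field_simp

lemma isBigO_gaussTerm_succ (a b c : ℂ) :
    (fun n ↦ gaussTerm a b c (n + 1)) =O[atTop] fun n : ℕ ↦ (n : ℂ) ^ (a + b - c) / (n + 1) := by
  have hbdd := (((tendsto_inv_GammaSeq a).mul (tendsto_inv_GammaSeq b)).mul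
    (GammaSeq_tendsto_Gamma c)).isBigO_one ℂ
  have := (isBigO_refl (fun n : ℕ ↦ (n : ℂ) ^ (a + b - c) / (n + 1)) atTop).mul hbdd
  simp only [mul_one] at this
  refine this.congr' ?_ EventuallyEq.rfl
  filter_upwards [eventually_ne_atTop 0] with n hn
  exact (gaussTerm_succ_eq_GammaSeq a b c hn).symm

lemma summable_gaussTerm {a b c : ℂ} (h : 0 < (c - a - b).re) : Summable (gaussTerm a b c) := by
  rw [← summable_nat_add_iff 1]
  refine summable_of_isBigO_nat (Real.summable_nat_rpow.2 (?_ : (a + b - c).re - 1 < -1))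
    ((isBigO_gaussTerm_succ a b c).trans (IsBigO.of_bound 1 ?_))
  · simp only [sub_re, add_re] at h ⊢
    linarith
  · filter_upwards [eventually_ne_atTop 0] with n hn
    have hn' : (0 : ℝ) < n := by positivity
    have : ‖(n : ℂ) + 1‖ = n + 1 := by
      exact_mod_cast Complex.norm_of_nonneg (by positivity : (0 : ℝ) ≤ n + 1)
    rw [norm_div, norm_natCast_cpow_of_pos (Nat.pos_of_ne_zero hn), this, one_mul,
      Real.norm_of_nonneg (by positivity), Real.rpow_sub_one hn'.ne']
    gcongr
    linarith

lemma tendsto_natCast_cpow_atTop_zero {z : ℂ} (hz : z.re < 0) :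
    Tendsto (fun n : ℕ ↦ (n : ℂ) ^ z) atTop (𝓝 0) := by
  rw [tendsto_zero_iff_norm_tendsto_zero]
  have := (tendsto_rpow_neg_atTop (neg_pos.2 hz)).comp tendsto_natCast_atTop_atTop
  rw [neg_neg] at this
  refine this.congr' ?_
  filter_upwards [eventually_ne_atTop 0] with n hn
  simp [norm_natCast_cpow_of_pos (Nat.pos_of_ne_zero hn)]

lemma tendsto_natCast_mul_gaussTerm {a b c : ℂ} (h : 0 < (c - a - b).re) :
    Tendsto (fun n : ℕ ↦ n * gaussTerm a b c n) atTop (𝓝 0) := by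
  rw [← tendsto_add_atTop_iff_nat 1]
  push_cast
  have := (isBigO_refl (fun n : ℕ ↦ (n : ℂ) + 1) atTop).mul (isBigO_gaussTerm_succ a b c)
  refine (this.congr_right fun n ↦ ?_).trans_tendsto
    (tendsto_natCast_cpow_atTop_zero (z := a + b - c) ?_)
  · exact mul_div_cancel₀ _ (by exact_mod_cast n.succ_ne_zero)
  · simp only [sub_re, add_re] at h ⊢
    linarith

lemma tsum_sub_succ_eq {G : Type*} [AddCommGroup G] [TopologicalSpace G] [IsTopologicalAddGroup G]
    [T2Space G] {f : ℕ → G} {l : G} (hs : Summable fun n ↦ f n - f (n + 1))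
    (hf : Tendsto f atTop (𝓝 l)) : ∑' n, (f n - f (n + 1)) = f 0 - l := by
  refine tendsto_nhds_unique hs.hasSum.tendsto_sum_nat ?_
  simp_rw [sum_range_sub']
  exact tendsto_const_nhds.sub hf

lemma F21C_one_contiguous {a b c : ℂ} (h : 0 < (c - a - b).re) (hc : ∀ n : ℕ, c ≠ -n) :
    c * (c - a - b) * F21C a b c 1 = (c - a) * (c - b) * F21C a b (c + 1) 1 := by
  have h₁ : 0 < (c + 1 - a - b).re := by simp only [sub_re, add_re, one_re] at h ⊢; linarith
  set w : ℕ → ℂ := fun n ↦ c * (n * gaussTerm a b c n)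
  have hterm : ∀ n, c * (c - a - b) * gaussTerm a b c n -
      (c - a) * (c - b) * gaussTerm a b (c + 1) n = w n - w (n + 1) := by
    intro n
    have hcn : c + n ≠ 0 := fun h ↦ hc n (eq_neg_of_add_eq_zero_left h)
    have : (n : ℂ) + 1 ≠ 0 := by exact_mod_cast n.succ_ne_zero
    have := gaussTerm_add_one_right a b hc n
    simp only [w, gaussTerm_succ]
    push_cast
    field_simp
    linear_combination (-(c - a) * (c - b)) * this
  have hS := (summable_gaussTerm h).mul_left (c * (c - a - b))
  have hS₁ := (summable_gaussTerm h₁).mul_left ((c - a) * (c - b))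
  have hw : Tendsto w atTop (𝓝 0) := by
    simpa using (tendsto_natCast_mul_gaussTerm h).const_mul c
  have := tsum_sub_succ_eq ((hS.sub hS₁).congr hterm) hw
  rw [← tsum_congr hterm, hS.tsum_sub hS₁, tsum_mul_left, tsum_mul_left] at this
  simp only [w, CharP.cast_eq_zero, zero_mul, mul_zero, sub_zero, sub_eq_zero] at this
  simpa [F21C_one] using this

lemma pochC_mul_F21C_one {a b c : ℂ} (h : 0 < (c - a - b).re) (hc : ∀ n : ℕ, c ≠ -n) (m : ℕ) :
    pochC c m * pochC (c - a - b) m * F21C a b c 1 =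
      pochC (c - a) m * pochC (c - b) m * F21C a b (c + m) 1 := by
  induction m with
  | zero => simp [pochC_zero]
  | succ m ih =>
    have hm : 0 < (c + m - a - b).re := by
      simp only [sub_re, add_re, natCast_re] at h ⊢; linarith [m.cast_nonneg (α := ℝ)]
    have hrel := F21C_one_contiguous hm (add_natCast_ne_neg_natCast hc m)
    rw [Nat.cast_succ, ← add_assoc]
    simp only [pochC_succ]
    linear_combination (c + m) * (c - a - b + m) * ih + pochC (c - a) m * pochC (c - b) m * hrel

lemma norm_mul_gaussTerm_succ_le {a b z : ℂ} {x : ℝ} (hx : 0 < x) (hxz : x ≤ z.re) (n : ℕ) :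
    ‖z‖ * ‖gaussTerm a b z (n + 1)‖ ≤ x * ‖gaussTerm ‖a‖ ‖b‖ x (n + 1)‖ := by
  have hz : 0 < ‖z‖ := hx.trans_le (hxz.trans (re_le_norm z))
  have hpx : 0 < ‖pochC (x + 1 : ℝ) n‖ :=
    norm_pos_iff.2 (pochC_ne_zero (ne_neg_natCast_of_re_pos (by rw [ofReal_re]; linarith)) n)
  have hpz := norm_pochC_le_of_le_re (x := x + 1) (z := z + 1) (by positivity)
    (by simpa using hxz) n
  have hf : (0 : ℝ) < (n + 1)! := by positivity
  simp only [ofReal_add, ofReal_one] at hpx hpz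
  calc ‖z‖ * ‖gaussTerm a b z (n + 1)‖
      = ‖pochC a (n + 1)‖ * ‖pochC b (n + 1)‖ / (‖pochC (z + 1) n‖ * (n + 1)!) := by
        rw [gaussTerm, pochC_succ' z]
        simp only [norm_div, norm_mul, norm_natCast]
        field_simp
    _ ≤ ‖pochC ‖a‖ (n + 1)‖ * ‖pochC ‖b‖ (n + 1)‖ / (‖pochC (x + 1) n‖ * (n + 1)!) := by
        gcongr <;> exact norm_pochC_le _ _
    _ = x * ‖gaussTerm ‖a‖ ‖b‖ x (n + 1)‖ := by
        rw [gaussTerm, pochC_succ' (x : ℂ)]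
        simp only [norm_div, norm_mul, norm_natCast, Complex.norm_of_nonneg hx.le]
        field_simp

lemma norm_mul_norm_F21C_one_sub_one_le {a b z : ℂ} {x : ℝ} (hx : ‖a‖ + ‖b‖ < x)
    (hxz : x ≤ z.re) :
    ‖z‖ * ‖F21C a b z 1 - 1‖ ≤ x * ∑' n, ‖gaussTerm ‖a‖ ‖b‖ x (n + 1)‖ := by
  have hx₀ : 0 < x := by linarith [norm_nonneg a, norm_nonneg b]
  have hz : 0 < (z - a - b).re := by
    simp only [sub_re]; linarith [re_le_norm a, re_le_norm b]
  have hSz := ((summable_nat_add_iff 1).2 (summable_gaussTerm hz)).norm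
  have hx' : 0 < ((x : ℂ) - ‖a‖ - ‖b‖).re := by simp only [sub_re, ofReal_re]; linarith
  have hSx := ((summable_nat_add_iff 1).2 (summable_gaussTerm hx')).norm
  rw [F21C_one, (summable_gaussTerm hz).tsum_eq_zero_add, gaussTerm_zero, add_sub_cancel_left,
    ← tsum_mul_left]
  calc ‖z‖ * ‖∑' n, gaussTerm a b z (n + 1)‖
      ≤ ‖z‖ * ∑' n, ‖gaussTerm a b z (n + 1)‖ := by gcongr; exact norm_tsum_le_tsum_norm hSz
    _ = ∑' n, ‖z‖ * ‖gaussTerm a b z (n + 1)‖ := tsum_mul_left.symm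
    _ ≤ ∑' n, x * ‖gaussTerm ‖a‖ ‖b‖ x (n + 1)‖ :=
      (hSz.mul_left _).tsum_le_tsum (norm_mul_gaussTerm_succ_le hx₀ hxz) (hSx.mul_left _)

lemma tendsto_F21C_one_add_nat (a b c : ℂ) :
    Tendsto (fun m : ℕ ↦ F21C a b (c + m) 1) atTop (𝓝 1) := by
  set x := ‖a‖ + ‖b‖ + 1
  have hre : Tendsto (fun m : ℕ ↦ (c + m).re) atTop atTop := by
    simpa using tendsto_atTop_add_const_left _ c.re tendsto_natCast_atTop_atTop
  have hnorm : Tendsto (fun m : ℕ ↦ ‖c + m‖) atTop atTop :=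
    tendsto_atTop_mono (fun m ↦ re_le_norm _) hre
  rw [tendsto_iff_norm_sub_tendsto_zero]
  refine squeeze_zero' (Eventually.of_forall fun _ ↦ norm_nonneg _) ?_
    ((tendsto_const_nhds (x := x * ∑' n, ‖gaussTerm ‖a‖ ‖b‖ x (n + 1)‖)).div_atTop hnorm)
  filter_upwards [hre.eventually_ge_atTop x, hnorm.eventually_gt_atTop 0] with m hm hpos
  rw [le_div_iff₀ hpos, mul_comm]
  exact norm_mul_norm_F21C_one_sub_one_le (by linarith) hm

lemma pochC_ratio_succ_eq_GammaSeq {s t u v : ℂ} (h : s + t = u + v) {n : ℕ} (hn : n ≠ 0) :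
    pochC s (n + 1) * pochC t (n + 1) / (pochC u (n + 1) * pochC v (n + 1)) =
      GammaSeq u n * GammaSeq v n / (GammaSeq s n * GammaSeq t n) := by
  have hn' : (n : ℂ) ≠ 0 := Nat.cast_ne_zero.2 hn
  have hpow : (n : ℂ) ^ s * (n : ℂ) ^ t = (n : ℂ) ^ u * (n : ℂ) ^ v := by
    rw [← cpow_add _ _ hn', ← cpow_add _ _ hn', h]
  have : (n : ℂ) ^ u * (n : ℂ) ^ v * (n ! * n !) ≠ 0 := by
    simp [hn', Nat.factorial_ne_zero]
  simp only [pochC_succ_eq_mul_inv_GammaSeq _ hn]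
  calc _ = (n : ℂ) ^ s * (n : ℂ) ^ t * (n ! * n !) / ((n : ℂ) ^ u * (n : ℂ) ^ v * (n ! * n !)) *
        ((GammaSeq s n)⁻¹ * (GammaSeq t n)⁻¹ / ((GammaSeq u n)⁻¹ * (GammaSeq v n)⁻¹)) := by ring
    _ = _ := by
      rw [hpow, div_self this, one_mul]
      simp only [div_eq_mul_inv, mul_inv, inv_inv]
      ring

lemma tendsto_pochC_ratio {s t u v : ℂ} (h : s + t = u + v) :
    Tendsto (fun n ↦ pochC s n * pochC t n / (pochC u n * pochC v n)) atTop
      (𝓝 (Gamma u * Gamma v / (Gamma s * Gamma t))) := by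
  rw [← tendsto_add_atTop_iff_nat 1, div_eq_mul_inv, mul_inv]
  refine (((GammaSeq_tendsto_Gamma u).mul (GammaSeq_tendsto_Gamma v)).mul
    ((tendsto_inv_GammaSeq s).mul (tendsto_inv_GammaSeq t))).congr' ?_
  filter_upwards [eventually_ne_atTop 0] with n hn
  rw [pochC_ratio_succ_eq_GammaSeq h hn, div_eq_mul_inv, mul_inv]

/-- Gauss's summation theorem. -/
theorem stmt1 (a b c : ℂ) (hre : 0 < (c - a - b).re)
    (hc : ∀ n : ℕ, c ≠ -(n : ℂ)) :
    F21C a b c 1 =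
      Complex.Gamma c * Complex.Gamma (c - a - b)
        / (Complex.Gamma (c - a) * Complex.Gamma (c - b)) := by
  have hF (m : ℕ) : pochC (c - a) m * pochC (c - b) m / (pochC c m * pochC (c - a - b) m) *
      F21C a b (c + m) 1 = F21C a b c 1 := by
    have hP := mul_ne_zero (pochC_ne_zero hc m) (pochC_ne_zero (ne_neg_natCast_of_re_pos hre) m)
    rw [div_mul_eq_mul_div, div_eq_iff hP, ← pochC_mul_F21C_one hre hc m, mul_comm]
  have hlim := (tendsto_pochC_ratio (by ring : (c - a) + (c - b) = c + (c - a - b))).mul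
    (tendsto_F21C_one_add_nat a b c)
  simp only [hF, mul_one] at hlim
  exact tendsto_nhds_unique tendsto_const_nhds hlim
end

section
/- For rational numbers $a=\frac{1}{6}$, $b=\frac{5}{6}$ and a rational $q=\frac{m}{n}$ in lowest terms with $0<q<1$ and $q\notin\{a,b\}$, the condition $\{sq\}+\{s(a-q)\}+\{s(b-q)\}+\{s(q-a-b)\}=2$ for all integers $s$ coprime to $\mathrm{lcm}(6,n)$ holds if and only if $q\in\{\frac{1}{2},\frac{1}{3},\frac{2}{3},\frac{1}{4},\frac{2}{4},\frac{3}{4},\frac{1}{5},\frac{2}{5},\frac{3}{5},\frac{4}{5}\}$. -/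
/-!
For `s` prime to `6` we have `s ≡ ±1 (mod 6)`, so multiplication by `s` only swaps `1/6` and
`5/6` modulo `ℤ`, and `s (q - 1/6 - 5/6) ≡ s q`. With `t = {s q}` the condition reads
`2 t + {1/6 - t} + {5/6 - t} = 2`, which holds exactly when `1/6 < t ≤ 5/6`.

If `q = m/n` in lowest terms, then `{s q} = (s m mod n)/n`. Since `(ℤ/lcm(6,n))ˣ → (ℤ/n)ˣ` is
onto, some admissible `s` has `s m ≡ 1 (mod n)`, giving `{s q} = 1/n`; so `n ≤ 5` is necessary.
Conversely for `2 ≤ n ≤ 5` every admissible `s` has `1/n ≤ {s q} ≤ 1 - 1/n`.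
-/

open Int

section Fract

variable {K : Type*} [Field K] [LinearOrder K] [IsStrictOrderedRing K] [FloorRing K]

theorem fract_sub_eq_ite {c : K} (hc0 : 0 ≤ c) (hc1 : c < 1) (y : K) :
    fract (c - y) = if fract y ≤ c then c - fract y else c - fract y + 1 := by
  have hy0 := fract_nonneg y
  have hy1 := fract_lt_one y
  rw [fract_eq_iff]
  split_ifs with h
  · exact ⟨by linarith, by linarith, -⌊y⌋, by rw [← self_sub_floor]; push_cast; ring⟩
  · exact ⟨by linarith, by linarith, -⌊y⌋ - 1, by rw [← self_sub_floor]; push_cast; ring⟩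

theorem two_mul_fract_add_fract_sub_add_fract_sub_eq_two_iff {c : K} (hc0 : 0 < c)
    (hc : c ≤ 1 / 2) (y : K) :
    2 * fract y + fract (c - y) + fract (1 - c - y) = 2 ↔ c < fract y ∧ fract y ≤ 1 - c := by
  rw [fract_sub_eq_ite hc0.le (by linarith), fract_sub_eq_ite (by linarith) (by linarith)]
  have hy0 := fract_nonneg y
  have hy1 := fract_lt_one y
  split_ifs <;> constructor <;> intro h <;> grind

theorem fract_sum_eq_two_iff {s : ℤ} (hs : IsCoprime s 6) (x : K) :
    fract (s * x) + fract (s * (1 / 6 - x)) + fract (s * (5 / 6 - x))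
        + fract (s * (x - 1 / 6 - 5 / 6)) = 2
      ↔ 1 / 6 < fract (s * x) ∧ fract (s * x) ≤ 5 / 6 := by
  have hlast : fract ((s : K) * (x - 1 / 6 - 5 / 6)) = fract (s * x) := by
    rw [show (s : K) * (x - 1 / 6 - 5 / 6) = s * x - s by ring, fract_sub_intCast]
  have hswap : fract ((s : K) * (1 / 6 - x)) + fract (s * (5 / 6 - x))
      = fract (1 / 6 - s * x) + fract (5 / 6 - s * x) := by
    have h2 : ¬ (2 : ℤ) ∣ s := fun h ↦ by
      simpa [Int.isUnit_iff] using hs.isUnit_of_dvd' h (by norm_num)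
    have h3 : ¬ (3 : ℤ) ∣ s := fun h ↦ by
      simpa [Int.isUnit_iff] using hs.isUnit_of_dvd' h (by norm_num)
    obtain ⟨k, hk | hk⟩ : ∃ k : ℤ, s = 6 * k + 1 ∨ s = 6 * k + 5 := ⟨s / 6, by omega⟩
    · rw [show (s : K) * (1 / 6 - x) = 1 / 6 - s * x + k by rw [hk]; push_cast; ring,
        show (s : K) * (5 / 6 - x) = 5 / 6 - s * x + (5 * k : ℤ) by rw [hk]; push_cast; ring,
        fract_add_intCast, fract_add_intCast]
    · rw [show (s : K) * (1 / 6 - x) = 5 / 6 - s * x + k by rw [hk]; push_cast; ring,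
        show (s : K) * (5 / 6 - x) = 1 / 6 - s * x + (5 * k + 4 : ℤ) by rw [hk]; push_cast; ring,
        fract_add_intCast, fract_add_intCast, add_comm]
  have key := two_mul_fract_add_fract_sub_add_fract_sub_eq_two_iff (by norm_num : (0 : K) < 1 / 6)
    (by norm_num) (s * x)
  rw [show (1 : K) - 1 / 6 = 5 / 6 by norm_num] at key
  rw [hlast, add_assoc (fract _), hswap, ← key]
  constructor <;> intro h <;> linarith

theorem fract_intCast_mul_ratCast (s : ℤ) (q : ℚ) :
    fract ((s : K) * q) = ((s * q.num % q.den : ℤ) : K) / q.den := by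
  rw [← fract_div_intCast_eq_div_intCast_mod]
  conv_lhs => rw [← Rat.num_div_den q]
  push_cast
  ring_nf

theorem fract_intCast_mul_eq_one_div_den {s : ℤ} {q : ℚ} (h : s * q.num ≡ 1 [ZMOD q.den])
    (hq : q.den ≠ 1) : fract ((s : K) * q) = 1 / q.den := by
  have hden : 1 < (q.den : ℤ) := by have := q.pos; omega
  rw [fract_intCast_mul_ratCast, h, Int.emod_eq_of_lt zero_le_one hden, Int.cast_one]

theorem one_div_den_le_fract_intCast_mul {s : ℤ} {q : ℚ} (hs : IsCoprime s q.den)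
    (hq : q.den ≠ 1) :
    1 / q.den ≤ fract ((s : K) * q) ∧ fract ((s : K) * q) ≤ 1 - 1 / q.den := by
  have hden : (0 : K) < q.den := by exact_mod_cast q.pos
  have hndvd : ¬ (q.den : ℤ) ∣ s * q.num := fun h ↦ by
    have := (hs.mul_left (Rat.isCoprime_num_den q)).isUnit_of_dvd' h dvd_rfl
    simp [Int.isUnit_iff, hq] at this
  have hpos : 1 ≤ s * q.num % q.den := by
    have := Int.emod_nonneg (s * q.num) (show (q.den : ℤ) ≠ 0 by exact_mod_cast q.den_nz)
    have : s * q.num % q.den ≠ 0 := fun h ↦ hndvd (Int.dvd_of_emod_eq_zero h)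
    omega
  have hlt : s * q.num % q.den + 1 ≤ q.den := by
    have := Int.emod_lt_of_pos (s * q.num) (show (0 : ℤ) < q.den by exact_mod_cast q.pos)
    omega
  rw [fract_intCast_mul_ratCast, one_sub_div hden.ne', div_le_div_iff_of_pos_right hden,
    div_le_div_iff_of_pos_right hden]
  constructor
  · exact_mod_cast hpos
  · rw [le_sub_iff_add_le]
    exact_mod_cast hlt

theorem fract_intCast_mul_bounds_of_den_le_five {s : ℤ} {q : ℚ} (hs : IsCoprime s q.den)
    (hq : q.den ≠ 1) (h5 : q.den ≤ 5) :
    1 / 6 < fract ((s : K) * q) ∧ fract ((s : K) * q) ≤ 5 / 6 := by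
  obtain ⟨hlo, hhi⟩ := one_div_den_le_fract_intCast_mul (K := K) hs hq
  have h5' : (q.den : K) ≤ 5 := by exact_mod_cast h5
  constructor
  · calc (1 : K) / 6 < 1 / 5 := by norm_num
      _ ≤ 1 / q.den := one_div_le_one_div_of_le (by exact_mod_cast q.pos) h5'
      _ ≤ _ := hlo
  · calc _ ≤ 1 - 1 / (q.den : K) := hhi
      _ ≤ 1 - 1 / 5 := by gcongr
      _ ≤ 5 / 6 := by norm_num

end Fract

theorem exists_isCoprime_mul_modEq_one {n L : ℕ} [NeZero L] (hnL : n ∣ L) {a : ℤ}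
    (ha : IsCoprime a n) : ∃ s : ℤ, IsCoprime s L ∧ s * a ≡ 1 [ZMOD n] := by
  obtain ⟨w, hw⟩ := ZMod.unitsMap_surjective hnL (ZMod.unitOfIsCoprime a ha)⁻¹
  refine ⟨((w : ZMod L).val : ℤ), Nat.isCoprime_iff_coprime.mpr (ZMod.val_coe_unit_coprime w), ?_⟩
  rw [← ZMod.intCast_eq_intCast_iff]
  push_cast
  rw [ZMod.natCast_val, ← ZMod.unitsMap_val hnL, hw]
  simp

theorem Rat.den_ne_one_of_pos_of_lt_one {q : ℚ} (h0 : 0 < q) (h1 : q < 1) : q.den ≠ 1 := by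
  have := Rat.num_pos.mpr h0
  have := Rat.num_lt_denom_iff.mpr h1
  omega

theorem mem_fractions_iff (q : ℚ) :
    q ∈ ({1/2, 1/3, 2/3, 1/4, 2/4, 3/4, 1/5, 2/5, 3/5, 4/5} : Set ℚ)
      ↔ 0 < q ∧ q < 1 ∧ q.den ≤ 5 := by
  constructor
  · simp only [Set.mem_insert_iff, Set.mem_singleton_iff]
    rintro (rfl | rfl | rfl | rfl | rfl | rfl | rfl | rfl | rfl | rfl) <;> norm_num
  · rintro ⟨h0, h1, hq⟩
    have hnum0 : 0 < q.num := Rat.num_pos.mpr h0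
    have hnum1 : q.num < q.den := Rat.num_lt_denom_iff.mpr h1
    obtain ⟨m, hm⟩ : ∃ m : ℕ, q.num = m := ⟨q.num.toNat, by omega⟩
    rw [← Rat.num_div_den q, hm]
    rw [hm] at hnum0 hnum1
    norm_cast at hnum0 hnum1
    generalize q.den = n at *
    interval_cases n <;> interval_cases m <;> norm_num

theorem stmt7_general (a b q : ℚ) (ha : a = 1/6) (hb : b = 5/6)
    (h0 : 0 < q) (h1 : q < 1) :
    (∀ s : ℤ, Int.gcd s (Nat.lcm 6 q.den) = 1 →
        Int.fract ((s : ℝ) * (q : ℝ)) + Int.fract ((s : ℝ) * ((a - q : ℚ) : ℝ))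
          + Int.fract ((s : ℝ) * ((b - q : ℚ) : ℝ))
          + Int.fract ((s : ℝ) * ((q - a - b : ℚ) : ℝ)) = 2)
      ↔ q ∈ ({1/2, 1/3, 2/3, 1/4, 2/4, 3/4, 1/5, 2/5, 3/5, 4/5} : Set ℚ) := by
  subst ha hb
  have hden := Rat.den_ne_one_of_pos_of_lt_one h0 h1
  have hcop {s : ℤ} (hs : Int.gcd s (Nat.lcm 6 q.den) = 1) (d : ℕ) (hd : d ∣ Nat.lcm 6 q.den) :
      IsCoprime s d :=
    (Int.isCoprime_iff_gcd_eq_one.mpr hs).of_isCoprime_of_dvd_right (Int.natCast_dvd_natCast.mpr hd)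
  rw [mem_fractions_iff]
  simp only [h0, h1, true_and]
  push_cast
  constructor
  · intro h
    have : NeZero (Nat.lcm 6 q.den) := ⟨Nat.lcm_ne_zero (by norm_num) q.den_nz⟩
    obtain ⟨s, hs, hsq⟩ :=
      exists_isCoprime_mul_modEq_one (Nat.dvd_lcm_right 6 q.den) (Rat.isCoprime_num_den q)
    have hs' := Int.isCoprime_iff_gcd_eq_one.mp hs
    have hlt := ((fract_sum_eq_two_iff (hcop hs' 6 (Nat.dvd_lcm_left _ _)) _).1 (h s hs')).1
    rw [fract_intCast_mul_eq_one_div_den hsq hden,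
      one_div_lt_one_div (by norm_num) (by exact_mod_cast q.pos)] at hlt
    have : q.den < 6 := by exact_mod_cast hlt
    omega
  · intro h5 s hs
    exact (fract_sum_eq_two_iff (hcop hs 6 (Nat.dvd_lcm_left _ _)) _).2
      (fract_intCast_mul_bounds_of_den_le_five (hcop hs q.den (Nat.dvd_lcm_right _ _)) hden h5)

theorem stmt7 (a b q : ℚ) (ha : a = 1/6) (hb : b = 5/6)
    (h0 : 0 < q) (h1 : q < 1) (hqa : q ≠ a) (hqb : q ≠ b) :
    (∀ s : ℤ, Int.gcd s (Nat.lcm 6 q.den) = 1 →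
        Int.fract ((s : ℝ) * (q : ℝ)) + Int.fract ((s : ℝ) * ((a - q : ℚ) : ℝ))
          + Int.fract ((s : ℝ) * ((b - q : ℚ) : ℝ))
          + Int.fract ((s : ℝ) * ((q - a - b : ℚ) : ℝ)) = 2)
      ↔ q ∈ ({1/2, 1/3, 2/3, 1/4, 2/4, 3/4, 1/5, 2/5, 3/5, 4/5} : Set ℚ) :=
  stmt7_general a b q ha hb h0 h1
end
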